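/- Let H, Y be Hilbert spaces, A : H → Y bounded linear, and suppose u₁ minimizes ‖Av − b₁‖² + ε‖v‖² and u₂ minimizes ‖Av − b₂‖² + ε‖v‖². Then ‖A(u₁ − u₂)‖² + ε‖u₁ − u₂‖² ≤ ‖b₁ − b₂‖·‖A(u₁ − u₂)‖, and consequently ‖A(u₁−u₂)‖² + 2ε‖u₁−u₂‖² ≤ ‖b₁ − b₂‖². -/

import Mathlib

/-!
Perturbing a minimiser `u` of the Tikhonov functional along `t • φ` gives a quadratic in `t`
with a minimum at `t = 0`, so its linear coefficient `⟪A u - b, A φ⟫ + ε ⟪u, φ⟫` vanishes.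
Subtracting these identities for the two data `b₁, b₂` and testing with `φ = u₁ - u₂` yields
`‖A (u₁ - u₂)‖² + ε ‖u₁ - u₂‖² = ⟪b₁ - b₂, A (u₁ - u₂)⟫`; Cauchy–Schwarz gives the first bound,
and `2 ‖b₁ - b₂‖ ‖A (u₁ - u₂)‖ ≤ ‖b₁ - b₂‖² + ‖A (u₁ - u₂)‖²` the second.
-/

open RealInnerProductSpace

section Tikhonov

variable {H Y : Type*} [NormedAddCommGroup H] [InnerProductSpace ℝ H]
  [NormedAddCommGroup Y] [InnerProductSpace ℝ Y]

noncomputable def tikhonov (A : H →ₗ[ℝ] Y) (b : Y) (ε : ℝ) (v : H) : ℝ :=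
  ‖A v - b‖ ^ 2 + ε * ‖v‖ ^ 2

lemma eq_zero_of_forall_mul_add_sq_nonneg {a c : ℝ} (h : ∀ t : ℝ, 0 ≤ a * t + c * t ^ 2) :
    a = 0 := by
  have hdisc := discrim_le_zero (a := c) (b := a) (c := 0) fun t => by
    simpa [sq, add_comm] using h t
  rw [discrim] at hdisc
  nlinarith [sq_nonneg a]

lemma norm_add_smul_sq_real (x y : H) (t : ℝ) :
    ‖x + t • y‖ ^ 2 = ‖x‖ ^ 2 + 2 * ⟪x, y⟫ * t + ‖y‖ ^ 2 * t ^ 2 := by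
  rw [norm_add_sq_real, real_inner_smul_right, norm_smul, Real.norm_eq_abs, mul_pow, sq_abs]
  ring

lemma tikhonov_add_smul (A : H →ₗ[ℝ] Y) (b : Y) (ε : ℝ) (u φ : H) (t : ℝ) :
    tikhonov A b ε (u + t • φ) = tikhonov A b ε u
      + 2 * (⟪A u - b, A φ⟫ + ε * ⟪u, φ⟫) * t + (‖A φ‖ ^ 2 + ε * ‖φ‖ ^ 2) * t ^ 2 := by
  have hA : A (u + t • φ) - b = (A u - b) + t • A φ := by
    rw [map_add, map_smul]; abel
  simp only [tikhonov, hA, norm_add_smul_sq_real]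
  ring

lemma inner_tikhonov_eq_zero_of_isMin {A : H →ₗ[ℝ] Y} {b : Y} {ε : ℝ} {u : H}
    (hu : ∀ v, tikhonov A b ε u ≤ tikhonov A b ε v) (φ : H) :
    ⟪A u - b, A φ⟫ + ε * ⟪u, φ⟫ = 0 := by
  have hquad : ∀ t : ℝ, 0 ≤ 2 * (⟪A u - b, A φ⟫ + ε * ⟪u, φ⟫) * t
      + (‖A φ‖ ^ 2 + ε * ‖φ‖ ^ 2) * t ^ 2 := fun t => by
    have := hu (u + t • φ)
    rw [tikhonov_add_smul] at this
    linarith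
  linarith [eq_zero_of_forall_mul_add_sq_nonneg hquad]

lemma tikhonov_stability_eq {A : H →ₗ[ℝ] Y} {b₁ b₂ : Y} {ε : ℝ} {u₁ u₂ : H}
    (h₁ : ∀ v, tikhonov A b₁ ε u₁ ≤ tikhonov A b₁ ε v)
    (h₂ : ∀ v, tikhonov A b₂ ε u₂ ≤ tikhonov A b₂ ε v) :
    ‖A (u₁ - u₂)‖ ^ 2 + ε * ‖u₁ - u₂‖ ^ 2 = ⟪b₁ - b₂, A (u₁ - u₂)⟫ := by
  have e₁ := inner_tikhonov_eq_zero_of_isMin h₁ (u₁ - u₂)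
  have e₂ := inner_tikhonov_eq_zero_of_isMin h₂ (u₁ - u₂)
  have hA : A (u₁ - u₂) = (A u₁ - b₁) - (A u₂ - b₂) + (b₁ - b₂) := by
    rw [map_sub]; abel
  have hres : ⟪A (u₁ - u₂), A (u₁ - u₂)⟫
      = ⟪A u₁ - b₁, A (u₁ - u₂)⟫ - ⟪A u₂ - b₂, A (u₁ - u₂)⟫ + ⟪b₁ - b₂, A (u₁ - u₂)⟫ := by
    nth_rw 1 [hA]
    rw [inner_add_left, inner_sub_left]
  rw [← real_inner_self_eq_norm_sq, ← real_inner_self_eq_norm_sq, hres, inner_sub_left u₁]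
  linarith

end Tikhonov

theorem stmt_16_general {H Y : Type*}
    [NormedAddCommGroup H] [InnerProductSpace ℝ H]
    [NormedAddCommGroup Y] [InnerProductSpace ℝ Y]
    (A : H →L[ℝ] Y) (b₁ b₂ : Y) (ε : ℝ) (u₁ u₂ : H)
    (h₁ : ∀ v : H, ‖A u₁ - b₁‖^2 + ε * ‖u₁‖^2 ≤ ‖A v - b₁‖^2 + ε * ‖v‖^2)
    (h₂ : ∀ v : H, ‖A u₂ - b₂‖^2 + ε * ‖u₂‖^2 ≤ ‖A v - b₂‖^2 + ε * ‖v‖^2) :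
    ‖A (u₁ - u₂)‖^2 + ε * ‖u₁ - u₂‖^2 ≤ ‖b₁ - b₂‖ * ‖A (u₁ - u₂)‖ ∧
      ‖A (u₁ - u₂)‖^2 + 2 * ε * ‖u₁ - u₂‖^2 ≤ ‖b₁ - b₂‖^2 := by
  have heq := tikhonov_stability_eq (A := (A : H →ₗ[ℝ] Y)) h₁ h₂
  have hcs := real_inner_le_norm (b₁ - b₂) (A (u₁ - u₂))
  have hfirst : ‖A (u₁ - u₂)‖ ^ 2 + ε * ‖u₁ - u₂‖ ^ 2 ≤ ‖b₁ - b₂‖ * ‖A (u₁ - u₂)‖ :=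
    heq ▸ hcs
  refine ⟨hfirst, ?_⟩
  nlinarith [sq_nonneg (‖b₁ - b₂‖ - ‖A (u₁ - u₂)‖)]

theorem stmt_16 {H Y : Type*}
    [NormedAddCommGroup H] [InnerProductSpace ℝ H] [CompleteSpace H]
    [NormedAddCommGroup Y] [InnerProductSpace ℝ Y] [CompleteSpace Y]
    (A : H →L[ℝ] Y) (b₁ b₂ : Y) (ε : ℝ) (hε : 0 < ε) (u₁ u₂ : H)
    (h₁ : ∀ v : H, ‖A u₁ - b₁‖^2 + ε * ‖u₁‖^2 ≤ ‖A v - b₁‖^2 + ε * ‖v‖^2)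
    (h₂ : ∀ v : H, ‖A u₂ - b₂‖^2 + ε * ‖u₂‖^2 ≤ ‖A v - b₂‖^2 + ε * ‖v‖^2) :
    ‖A (u₁ - u₂)‖^2 + ε * ‖u₁ - u₂‖^2 ≤ ‖b₁ - b₂‖ * ‖A (u₁ - u₂)‖ ∧
      ‖A (u₁ - u₂)‖^2 + 2 * ε * ‖u₁ - u₂‖^2 ≤ ‖b₁ - b₂‖^2 :=
  stmt_16_general A b₁ b₂ ε u₁ u₂ h₁ h₂
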